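/- For every n ∈ ℕ with n ≥ 1 and each choice of sign ±, the function ψ̂_{±n}(x) := e^{−x²/2} 𝓗_{±n}(x) is an eigenfunction of the supercharge Q with eigenvalue ±√(2n): (Q ψ̂_{±n})(x) = ±√(2n) · ψ̂_{±n}(x) for all x ∈ ℝ; and Q(e^{−x²/2} 𝓗_0) = 0. -/

import Mathlib

/-- The physicists' Hermite polynomial, via the Rodrigues formula
`H n x = (-1)^n e^(x²) (dⁿ/dxⁿ) e^(-x²)`. -/
noncomputable def physHermite (n : ℕ) (x : ℝ) : ℝ :=
    (-1 : ℝ) ^ n * Real.exp (x ^ 2) * iteratedDeriv n (fun y : ℝ => Real.exp (-y ^ 2)) x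

/-- The supersymmetric Hermite polynomial `𝓗_{εn} = H_{2n} + ε 2√n H_{2n-1}` for `n ≥ 1`
(with sign `ε = ±1`), and `𝓗₀ = 1`. -/
noncomputable def ssHermite (ε : ℝ) (n : ℕ) (x : ℝ) : ℝ :=
    if n = 0 then 1
    else physHermite (2 * n) x + ε * (2 * Real.sqrt n) * physHermite (2 * n - 1) x

/-- The supercharge operator `(Q f)(x) = (1/√2)(-f'(-x) + x f(x))`. -/
noncomputable def supercharge (f : ℝ → ℝ) (x : ℝ) : ℝ :=
    (1 / Real.sqrt 2) * (-(deriv f (-x)) + x * f x)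

/-!
Writing `ψ(x) = e^{-x²/2} q(x)` with `q` a polynomial, the Gaussian factor pulls out of the
supercharge: `√2 e^{x²/2} (Qψ)(x) = x (q(x) - q(-x)) - q'(-x)`. For the Hermite polynomials
`H_k' = 2k H_{k-1}`, `H_k(-x) = (-1)^k H_k(x)` and `H_{k+1} = 2x H_k - 2k H_{k-1}`, so for
`q = H_{2n} + c H_{2n-1}` the right-hand side is `c H_{2n} + 4n H_{2n-1}`, which equals `c q`
exactly when `c² = 4n`. With `c = ±2√n` this is the eigenvalue `±2√n / √2 = ±√(2n)`.
-/

open Polynomial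

noncomputable def physHermitePoly : ℕ → ℝ[X]
  | 0 => 1
  | n + 1 => 2 * X * physHermitePoly n - derivative (physHermitePoly n)

namespace physHermitePoly

theorem succ (n : ℕ) :
    physHermitePoly (n + 1) = 2 * X * physHermitePoly n - derivative (physHermitePoly n) :=
  rfl

theorem derivative_succ (n : ℕ) :
    derivative (physHermitePoly (n + 1)) = C (2 * (n + 1) : ℝ) * physHermitePoly n := by
  induction n with
  | zero => simp [physHermitePoly, ← C_ofNat]
  | succ n ih =>
    rw [succ (n + 1), derivative_sub, derivative_mul, ih, derivative_mul, succ n]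
    simp only [derivative_mul, derivative_ofNat, derivative_X, derivative_natCast, derivative_one,
      zero_mul, zero_add, mul_one, map_mul, map_add, map_natCast, map_ofNat, map_one, Nat.cast_add,
      Nat.cast_one]
    ring

theorem succ_succ (n : ℕ) :
    physHermitePoly (n + 2) =
      2 * X * physHermitePoly (n + 1) - C (2 * (n + 1) : ℝ) * physHermitePoly n := by
  rw [succ (n + 1), derivative_succ]

theorem comp_neg_X (n : ℕ) : (physHermitePoly n).comp (-X) = (-1) ^ n * physHermitePoly n := by
  induction n with
  | zero => simp [physHermitePoly]
  | succ n ih =>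
    have hderiv : (derivative (physHermitePoly n)).comp (-X) =
        (-1) ^ (n + 1) * derivative (physHermitePoly n) := by
      have h := derivative_comp (physHermitePoly n) (-X)
      rw [ih, derivative_neg, derivative_X, ← C_1, ← C_neg, ← C_pow, derivative_C_mul,
        C_pow, C_neg, C_1] at h
      linear_combination h
    rw [succ, sub_comp, mul_comp, mul_comp, X_comp, ofNat_comp, ih, hderiv]
    ring

theorem eval_neg (n : ℕ) (x : ℝ) :
    (physHermitePoly n).eval (-x) = (-1) ^ n * (physHermitePoly n).eval x := by
  simpa [eval_comp] using congrArg (eval x) (comp_neg_X n)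

end physHermitePoly

theorem hasDerivAt_exp_neg_sq (x : ℝ) :
    HasDerivAt (fun y : ℝ => Real.exp (-y ^ 2)) (-2 * x * Real.exp (-x ^ 2)) x := by
  convert ((hasDerivAt_pow 2 x).fun_neg).exp using 1
  ring

theorem hasDerivAt_exp_neg_sq_div_two (x : ℝ) :
    HasDerivAt (fun y : ℝ => Real.exp (-y ^ 2 / 2)) (-x * Real.exp (-x ^ 2 / 2)) x := by
  convert (((hasDerivAt_pow 2 x).fun_neg).div_const 2).exp using 1
  ring

theorem iteratedDeriv_exp_neg_sq (n : ℕ) (x : ℝ) :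
    iteratedDeriv n (fun y : ℝ => Real.exp (-y ^ 2)) x =
      (-1) ^ n * (physHermitePoly n).eval x * Real.exp (-x ^ 2) := by
  induction n generalizing x with
  | zero => simp [physHermitePoly]
  | succ n ih =>
    rw [iteratedDeriv_succ, funext ih]
    have h := (((physHermitePoly n).hasDerivAt x).fun_mul (hasDerivAt_exp_neg_sq x)).const_mul
      ((-1 : ℝ) ^ n)
    simp only [← mul_assoc] at h
    rw [h.deriv, physHermitePoly.succ]
    simp only [eval_sub, eval_mul, eval_ofNat, eval_X]
    ring

theorem physHermite_eq_eval (n : ℕ) (x : ℝ) : physHermite n x = (physHermitePoly n).eval x := by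
  have hexp : Real.exp (x ^ 2) * Real.exp (-x ^ 2) = 1 := by
    rw [← Real.exp_add, add_neg_cancel, Real.exp_zero]
  have hsign : ((-1 : ℝ) ^ n) * (-1) ^ n = 1 := by rw [← mul_pow]; norm_num
  rw [physHermite, iteratedDeriv_exp_neg_sq]
  linear_combination ((physHermitePoly n).eval x * Real.exp (x ^ 2) * Real.exp (-x ^ 2)) * hsign
    + (physHermitePoly n).eval x * hexp

theorem supercharge_exp_mul_eval (q : ℝ[X]) (x : ℝ) :
    supercharge (fun y => Real.exp (-y ^ 2 / 2) * q.eval y) x =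
      Real.exp (-x ^ 2 / 2) / Real.sqrt 2 *
        (x * (q.eval x - q.eval (-x)) - (derivative q).eval (-x)) := by
  have h := (hasDerivAt_exp_neg_sq_div_two (-x)).fun_mul (q.hasDerivAt (-x))
  rw [supercharge, h.deriv, neg_sq]
  ring

/-- `H_{2n} + c H_{2n-1}`, indexed by `n - 1`. -/
noncomputable def ssHermitePoly (c : ℝ) (n : ℕ) : ℝ[X] :=
  physHermitePoly (2 * n + 2) + C c * physHermitePoly (2 * n + 1)

theorem ssHermite_eq_eval (ε : ℝ) (n : ℕ) (x : ℝ) :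
    ssHermite ε (n + 1) x = (ssHermitePoly (ε * (2 * Real.sqrt (n + 1))) n).eval x := by
  have hodd : 2 * (n + 1) - 1 = 2 * n + 1 := by omega
  simp only [ssHermite, ssHermitePoly, Nat.add_one_ne_zero, if_false, hodd, physHermite_eq_eval,
    eval_add, eval_mul, eval_C, Nat.cast_add, Nat.cast_one]
  ring_nf

theorem ssHermitePoly_reflection_identity {c : ℝ} (n : ℕ) (hc : c ^ 2 = 4 * (n + 1)) :
    X * (ssHermitePoly c n - (ssHermitePoly c n).comp (-X)) -
        (derivative (ssHermitePoly c n)).comp (-X) = C c * ssHermitePoly c n := by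
  have hcC : C c * C c = 4 * ((n : ℝ[X]) + 1) := by
    rw [← C_mul, ← sq, hc, map_mul, map_add, map_natCast, map_one, map_ofNat]
  have heven (k : ℕ) : (-1 : ℝ[X]) ^ (2 * k) = 1 := by simp [pow_mul]
  simp only [ssHermitePoly, derivative_add, derivative_C_mul, physHermitePoly.derivative_succ,
    add_comp, mul_comp, C_comp, physHermitePoly.comp_neg_X, heven, pow_succ, mul_neg, mul_one,
    neg_mul, one_mul]
  rw [physHermitePoly.succ_succ (2 * n)]
  simp only [map_mul, map_add, map_ofNat, map_natCast, map_one]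
  push_cast
  linear_combination (-physHermitePoly (2 * n + 1)) * hcC

theorem supercharge_exp_mul_ssHermitePoly {c : ℝ} (n : ℕ) (hc : c ^ 2 = 4 * (n + 1)) (x : ℝ) :
    supercharge (fun y => Real.exp (-y ^ 2 / 2) * (ssHermitePoly c n).eval y) x =
      c / Real.sqrt 2 * (Real.exp (-x ^ 2 / 2) * (ssHermitePoly c n).eval x) := by
  have h := congrArg (eval x) (ssHermitePoly_reflection_identity n hc)
  simp only [eval_sub, eval_mul, eval_X, eval_comp, eval_neg, eval_C] at h
  rw [supercharge_exp_mul_eval, h]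
  ring

theorem two_mul_sqrt_div_sqrt_two (a : ℝ) :
    2 * Real.sqrt a / Real.sqrt 2 = Real.sqrt (2 * a) := by
  rw [div_eq_iff (by positivity), Real.sqrt_mul zero_le_two]
  linear_combination -Real.sqrt a * Real.mul_self_sqrt zero_le_two

/-- The functions `ψ̂_{εn}(x) = e^(-x²/2) 𝓗_{εn}(x)` are eigenfunctions of the
supercharge `Q` with eigenvalue `ε √(2n)` for `n ≥ 1`, and `Q(e^(-x²/2) 𝓗₀) = 0`. -/
theorem supercharge_ssHermite_eigen :
    (∀ n : ℕ, 1 ≤ n → ∀ ε : ℝ, ε = 1 ∨ ε = -1 → ∀ x : ℝ,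
      supercharge (fun y : ℝ => Real.exp (-y ^ 2 / 2) * ssHermite ε n y) x =
        ε * Real.sqrt (2 * n) * (Real.exp (-x ^ 2 / 2) * ssHermite ε n x)) ∧
    (∀ ε : ℝ, ε = 1 ∨ ε = -1 → ∀ x : ℝ,
      supercharge (fun y : ℝ => Real.exp (-y ^ 2 / 2) * ssHermite ε 0 y) x = 0) := by
  refine ⟨fun n hn ε hε x => ?_, fun ε _ x => ?_⟩
  · obtain ⟨m, rfl⟩ := Nat.exists_eq_add_of_le' hn
    have hc : (ε * (2 * Real.sqrt (m + 1))) ^ 2 = 4 * (m + 1) := by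
      have hε2 : ε ^ 2 = 1 := by rcases hε with rfl | rfl <;> norm_num
      rw [mul_pow, mul_pow, hε2, Real.sq_sqrt (by positivity)]
      ring
    have hfun : (fun y => Real.exp (-y ^ 2 / 2) * ssHermite ε (m + 1) y) = fun y =>
        Real.exp (-y ^ 2 / 2) * (ssHermitePoly (ε * (2 * Real.sqrt (m + 1))) m).eval y :=
      funext fun y => by rw [ssHermite_eq_eval]
    rw [hfun, supercharge_exp_mul_ssHermitePoly m hc, ssHermite_eq_eval, mul_div_assoc,
      two_mul_sqrt_div_sqrt_two, Nat.cast_add_one]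
  · simpa [ssHermite] using supercharge_exp_mul_eval 1 x
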